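/- arXiv:2604.26812 — 3 statements merged into one kernel-verified Lean document; each statement's English description precedes it below -/
import Mathlib

section
/- Let J be a Jordan curve in ℝ². There exists an angle θ* ∈ (0, 2π) such that the image of J under rotation about the origin by angle θ* contains no vertical line segment of positive length; equivalently, for every vertical line l, the intersection of l with the rotated curve contains no segment of positive length. -/
open Real Set

/-- The unit circle in ℝ². -/
def unitCircle : Set (ℝ × ℝ) := {p : ℝ × ℝ | p.1 ^ 2 + p.2 ^ 2 = 1}

/-- Clockwise rotation of the plane about the origin by angle `θ`. -/
noncomputable def rotCW (θ : ℝ) (p : ℝ × ℝ) : ℝ × ℝ :=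
  (p.1 * Real.cos θ + p.2 * Real.sin θ, -p.1 * Real.sin θ + p.2 * Real.cos θ)

private lemma rotCW_rotCW_neg (θ : ℝ) (p : ℝ × ℝ) : rotCW θ (rotCW (-θ) p) = p := by
  have h := Real.sin_sq_add_cos_sq θ
  simp only [rotCW, Real.cos_neg, Real.sin_neg]
  obtain ⟨x, y⟩ := p
  simp only [Prod.mk.injEq]
  constructor
  · linear_combination x * h
  · linear_combination y * h

private lemma rotCW_neg_rotCW (θ : ℝ) (p : ℝ × ℝ) : rotCW (-θ) (rotCW θ p) = p := by
  have h := Real.sin_sq_add_cos_sq θ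
  simp only [rotCW, Real.cos_neg, Real.sin_neg]
  obtain ⟨x, y⟩ := p
  simp only [Prod.mk.injEq]
  constructor
  · linear_combination x * h
  · linear_combination y * h

private lemma rotCW_smul_add (θ a b : ℝ) (x y : ℝ × ℝ) :
    rotCW θ (a • x + b • y) = a • rotCW θ x + b • rotCW θ y := by
  obtain ⟨x1, x2⟩ := x; obtain ⟨y1, y2⟩ := y
  simp only [rotCW, Prod.smul_mk, Prod.mk_add_mk, smul_eq_mul, Prod.mk.injEq]
  constructor <;> ring

private lemma rotCW_mem_segment {θ : ℝ} {x u v : ℝ × ℝ} (hx : x ∈ segment ℝ u v) :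
    rotCW θ x ∈ segment ℝ (rotCW θ u) (rotCW θ v) := by
  rcases hx with ⟨a, b, ha, hb, hab, rfl⟩
  exact ⟨a, b, ha, hb, hab, (rotCW_smul_add θ a b u v).symm⟩

private lemma sub_of_mem_segment {x y u v : ℝ × ℝ} (hx : x ∈ segment ℝ u v)
    (hy : y ∈ segment ℝ u v) : ∃ t : ℝ, x - y = t • (v - u) := by
  rcases hx with ⟨a, b, ha, hb, hab, rfl⟩
  rcases hy with ⟨a', b', ha', hb', hab', rfl⟩
  refine ⟨b - b', ?_⟩
  have h1 : a = 1 - b := by linarith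
  have h2 : a' = 1 - b' := by linarith
  subst h1; subst h2
  module

private lemma nonparallel {θ θ' : ℝ} (hθ : θ ∈ Set.Ioo 0 π) (hθ' : θ' ∈ Set.Ioo 0 π)
    (hne : θ ≠ θ') {a b : ℝ}
    (h : a • ((-Real.sin θ, Real.cos θ) : ℝ × ℝ) = b • (-Real.sin θ', Real.cos θ')) :
    a = 0 := by
  simp only [Prod.smul_mk, smul_eq_mul, Prod.mk.injEq] at h
  have hs : Real.sin (θ - θ') ≠ 0 := by
    intro h0
    obtain ⟨hθ1, hθ2⟩ := hθ
    obtain ⟨hθ1', hθ2'⟩ := hθ'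
    exact sub_ne_zero.mpr hne
      ((Real.sin_eq_zero_iff_of_lt_of_lt (by linarith) (by linarith)).mp h0)
  have hz : a * Real.sin (θ - θ') = 0 := by
    rw [Real.sin_sub]
    linear_combination (-Real.cos θ') * h.1 - Real.sin θ' * h.2
  rcases mul_eq_zero.mp hz with h0 | h0
  · exact h0
  · exact absurd h0 hs

/-- Two points lying on two segments with non-parallel directions coincide. -/
private lemma cross {θ θ' : ℝ} (hθ : θ ∈ Set.Ioo 0 π) (hθ' : θ' ∈ Set.Ioo 0 π) (hne : θ ≠ θ')
    {c c' : ℝ} {P Q P' Q' x y : ℝ × ℝ}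
    (hd : Q - P = c • ((-Real.sin θ, Real.cos θ) : ℝ × ℝ))
    (hd' : Q' - P' = c' • ((-Real.sin θ', Real.cos θ') : ℝ × ℝ))
    (hx : x ∈ segment ℝ P Q) (hy : y ∈ segment ℝ P Q)
    (hx' : x ∈ segment ℝ P' Q') (hy' : y ∈ segment ℝ P' Q') : x = y := by
  obtain ⟨t, ht⟩ := sub_of_mem_segment hx hy
  obtain ⟨t', ht'⟩ := sub_of_mem_segment hx' hy'
  rw [hd, smul_smul] at ht
  rw [hd', smul_smul] at ht'
  have h0 : t * c = 0 := nonparallel hθ hθ' hne (ht.symm.trans ht')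
  rw [h0, zero_smul] at ht
  exact sub_eq_zero.mp ht

private lemma circle_mem (t : ℝ) : ((Real.cos t, Real.sin t) : ℝ × ℝ) ∈ unitCircle := by
  simp only [unitCircle, Set.mem_setOf_eq]
  exact Real.cos_sq_add_sin_sq t

private lemma param_inj {s t : ℝ} (h1 : -(2 * π) < s - t) (h2 : s - t < 2 * π)
    (hcos : Real.cos s = Real.cos t) (hsin : Real.sin s = Real.sin t) : s = t := by
  have hc : Real.cos (s - t) = 1 := by
    rw [Real.cos_sub, hcos, hsin]
    linear_combination Real.cos_sq_add_sin_sq t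
  have := (Real.cos_eq_one_iff_of_lt_of_lt h1 h2).mp hc
  linarith

private lemma param_surj {z : ℝ × ℝ} (hz : z ∈ unitCircle) (b : ℝ) :
    ∃ t ∈ Set.Ico b (b + 2 * π), Real.cos t = z.1 ∧ Real.sin t = z.2 := by
  have hz' : z.1 ^ 2 + z.2 ^ 2 = 1 := hz
  have h1 : -1 ≤ z.1 := by nlinarith [sq_nonneg z.2]
  have h2 : z.1 ≤ 1 := by nlinarith [sq_nonneg z.2]
  have habs : Real.sin (Real.arccos z.1) = |z.2| := by
    rw [Real.sin_arccos]
    have : 1 - z.1 ^ 2 = z.2 ^ 2 := by linarith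
    rw [this, Real.sqrt_sq_eq_abs]
  have key : ∃ t₀ : ℝ, Real.cos t₀ = z.1 ∧ Real.sin t₀ = z.2 := by
    rcases le_or_gt 0 z.2 with hy | hy
    · exact ⟨Real.arccos z.1, Real.cos_arccos h1 h2, by rw [habs, abs_of_nonneg hy]⟩
    · refine ⟨-Real.arccos z.1, ?_, ?_⟩
      · rw [Real.cos_neg]; exact Real.cos_arccos h1 h2
      · rw [Real.sin_neg, habs, abs_of_neg hy, neg_neg]
  obtain ⟨t₀, hct, hst⟩ := key
  have hp : (0 : ℝ) < 2 * π := by positivity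
  refine ⟨toIcoMod hp b t₀, toIcoMod_mem_Ico hp b t₀, ?_, ?_⟩
  · have h := self_sub_toIcoMod hp b t₀
    have : toIcoMod hp b t₀ = t₀ - (toIcoDiv hp b t₀ : ℝ) * (2 * π) := by
      rw [← zsmul_eq_mul]; linarith [h]
    rw [this, Real.cos_sub_int_mul_two_pi, hct]
  · have h := self_sub_toIcoMod hp b t₀
    have : toIcoMod hp b t₀ = t₀ - (toIcoDiv hp b t₀ : ℝ) * (2 * π) := by
      rw [← zsmul_eq_mul]; linarith [h]
    rw [this, Real.sin_sub_int_mul_two_pi, hst]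

private lemma aux_countable (ψ : ℝ × ℝ → ℝ × ℝ) (hc : ContinuousOn ψ unitCircle)
    (hi : Set.InjOn ψ unitCircle) (P Q : ℝ → ℝ × ℝ) (c : ℝ → ℝ) (b : ℝ) (Θ : Set ℝ)
    (hΘ : Θ ⊆ Set.Ioo 0 π)
    (hc0 : ∀ θ ∈ Θ, c θ ≠ 0)
    (hdir : ∀ θ ∈ Θ, Q θ - P θ = c θ • ((-Real.sin θ, Real.cos θ) : ℝ × ℝ))
    (hsub : ∀ θ ∈ Θ, segment ℝ (P θ) (Q θ) ⊆ ψ '' unitCircle)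
    (hbase : ∀ θ ∈ Θ, ψ (Real.cos b, Real.sin b) ∉ segment ℝ (P θ) (Q θ)) :
    Θ.Countable := by
  set γ : ℝ → ℝ × ℝ := fun t => ψ (Real.cos t, Real.sin t) with hγdef
  have hγcont : Continuous γ :=
    hc.comp_continuous (Real.continuous_cos.prodMk Real.continuous_sin) (fun t => circle_mem t)
  have hγper : γ (b + 2 * π) = γ b := by
    simp only [hγdef, Real.cos_add_two_pi, Real.sin_add_two_pi]
  have hγinj : Set.InjOn γ (Set.Ioo b (b + 2 * π)) := by
    intro s hs t ht h
    have he := hi (circle_mem s) (circle_mem t) h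
    rw [Prod.mk.injEq] at he
    exact param_inj (by simp only [Set.mem_Ioo] at hs ht; linarith)
      (by simp only [Set.mem_Ioo] at hs ht; linarith) he.1 he.2
  set K : ℝ → Set ℝ := fun θ => {t ∈ Set.Icc b (b + 2 * π) | γ t ∈ segment ℝ (P θ) (Q θ)}
    with hKdef
  have hKsub : ∀ θ ∈ Θ, K θ ⊆ Set.Ioo b (b + 2 * π) := by
    intro θ hθm t ht
    obtain ⟨⟨h1, h2⟩, hseg⟩ := ht
    constructor
    · rcases h1.lt_or_eq with h | h
      · exact h
      · exact absurd (h ▸ hseg) (hbase θ hθm)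
    · rcases h2.lt_or_eq with h | h
      · exact h
      · rw [h, hγper] at hseg
        exact absurd hseg (hbase θ hθm)
  have hKmem : ∀ θ ∈ Θ, ∀ x ∈ segment ℝ (P θ) (Q θ), ∃ t ∈ K θ, γ t = x := by
    intro θ hθm x hx
    obtain ⟨z, hz, rfl⟩ := hsub θ hθm hx
    obtain ⟨t, htI, h1, h2⟩ := param_surj hz b
    have hzt : ((Real.cos t, Real.sin t) : ℝ × ℝ) = z := by
      rw [Prod.mk.injEq]; exact ⟨h1, h2⟩
    refine ⟨t, ⟨⟨htI.1, htI.2.le⟩, ?_⟩, ?_⟩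
    · show ψ (Real.cos t, Real.sin t) ∈ _
      rw [hzt]; exact hx
    · show ψ (Real.cos t, Real.sin t) = ψ z
      rw [hzt]
  have hsegcl : ∀ u v : ℝ × ℝ, IsClosed (segment ℝ u v) := by
    intro u v
    rw [segment_eq_image]
    exact (isCompact_Icc.image (by continuity)).isClosed
  have key : ∀ θ ∈ Θ, ∃ q : ℚ, ∃ t₁ t₂ : ℝ, t₁ < (q : ℝ) ∧ (q : ℝ) < t₂ ∧
      Set.Icc t₁ t₂ ⊆ K θ := by
    intro θ hθm
    have hKeq : K θ = Set.Icc b (b + 2 * π) ∩ γ ⁻¹' segment ℝ (P θ) (Q θ) := rfl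
    have hKcomp : IsCompact (K θ) := by
      rw [hKeq]
      exact isCompact_Icc.inter_right ((hsegcl _ _).preimage hγcont)
    have hSconn : IsConnected (segment ℝ (P θ) (Q θ)) :=
      (convex_segment _ _).isConnected ⟨_, left_mem_segment ℝ _ _⟩
    haveI : CompactSpace (K θ) := isCompact_iff_compactSpace.mp hKcomp
    haveI : ConnectedSpace (segment ℝ (P θ) (Q θ)) := Subtype.connectedSpace hSconn
    have hbij : Function.Bijective
        (fun t : K θ => (⟨γ t, t.2.2⟩ : segment ℝ (P θ) (Q θ))) := by
      constructor
      · intro s t h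
        apply Subtype.ext
        exact hγinj (hKsub θ hθm s.2) (hKsub θ hθm t.2)
          (congrArg Subtype.val h)
      · intro x
        obtain ⟨t, ht, hgt⟩ := hKmem θ hθm x x.2
        exact ⟨⟨t, ht⟩, Subtype.ext hgt⟩
    have hco : Continuous (fun t : K θ => (⟨γ t, t.2.2⟩ : segment ℝ (P θ) (Q θ))) :=
      Continuous.subtype_mk (hγcont.comp continuous_subtype_val) _
    have hconn : IsConnected (K θ) := by
      rw [isConnected_iff_connectedSpace]
      exact (Continuous.homeoOfEquivCompactToT2
        (f := Equiv.ofBijective _ hbij) hco).symm.surjective.connectedSpace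
        (Continuous.homeoOfEquivCompactToT2 (f := Equiv.ofBijective _ hbij) hco).symm.continuous
    have hPQ : P θ ≠ Q θ := by
      intro h
      have hd := hdir θ hθm
      rw [h, sub_self] at hd
      have : (0 : ℝ) = c θ * (-Real.sin θ) := congrArg Prod.fst hd
      have hsθ : 0 < Real.sin θ := Real.sin_pos_of_pos_of_lt_pi (hΘ hθm).1 (hΘ hθm).2
      rcases mul_eq_zero.mp this.symm with h0 | h0
      · exact hc0 θ hθm h0
      · linarith
    obtain ⟨t₁, ht₁K, hg₁⟩ := hKmem θ hθm (P θ) (left_mem_segment ℝ _ _)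
    obtain ⟨t₂, ht₂K, hg₂⟩ := hKmem θ hθm (Q θ) (right_mem_segment ℝ _ _)
    have htne : t₁ ≠ t₂ := by
      intro h
      exact hPQ (by rw [← hg₁, ← hg₂, h])
    rcases htne.lt_or_gt with hlt | hlt
    · obtain ⟨q, hq1, hq2⟩ := exists_rat_btwn hlt
      exact ⟨q, t₁, t₂, hq1, hq2, hconn.isPreconnected.Icc_subset ht₁K ht₂K⟩
    · obtain ⟨q, hq1, hq2⟩ := exists_rat_btwn hlt
      exact ⟨q, t₂, t₁, hq1, hq2, hconn.isPreconnected.Icc_subset ht₂K ht₁K⟩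
  choose f t₁ t₂ hf1 hf2 hIcc using key
  rw [← Set.countable_coe_iff]
  have hinj : Function.Injective (fun θ : Θ => f θ θ.2) := by
    intro ⟨θ, hθm⟩ ⟨θ', hθm'⟩ h
    simp only at h
    by_contra hne
    have hne' : θ ≠ θ' := fun he => hne (Subtype.ext he)
    -- the rational point
    set q : ℝ := (f θ hθm : ℝ) with hq
    have hq' : ((f θ' hθm' : ℚ) : ℝ) = q := by rw [← h]
    -- find a second common point
    have hl : max (t₁ θ hθm) (t₁ θ' hθm') < q := max_lt (hf1 θ hθm) (hq' ▸ hf1 θ' hθm')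
    obtain ⟨w, hw1, hw2⟩ := exists_between hl
    have hwK : w ∈ K θ ∧ w ∈ K θ' := by
      constructor
      · exact hIcc θ hθm ⟨(le_max_left _ _).trans hw1.le,
          hw2.le.trans (hf2 θ hθm).le⟩
      · exact hIcc θ' hθm' ⟨(le_max_right _ _).trans hw1.le,
          hw2.le.trans (hq' ▸ (hf2 θ' hθm').le)⟩
    have hqK : q ∈ K θ ∧ q ∈ K θ' := by
      constructor
      · exact hIcc θ hθm ⟨(hf1 θ hθm).le, (hf2 θ hθm).le⟩
      · exact hIcc θ' hθm' ⟨(hq' ▸ (hf1 θ' hθm').le), (hq' ▸ (hf2 θ' hθm').le)⟩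
    have hγne : γ w ≠ γ q := by
      intro he
      exact hw2.ne (hγinj (hKsub θ hθm hwK.1) (hKsub θ hθm hqK.1) he)
    exact hγne (cross (hΘ hθm) (hΘ hθm') hne' (hdir θ hθm) (hdir θ' hθm')
      hwK.1.2 hqK.1.2 hwK.2.2 hqK.2.2)
  exact hinj.countable

/-- for a Jordan curve `J` there is an angle `θ* ∈ (0, 2π)` such that
the rotation of `J` by `θ*` about the origin contains no vertical segment of
positive length. -/
theorem exists_rotation_no_vertical_segment (ψ : ℝ × ℝ → ℝ × ℝ)
    (hc : ContinuousOn ψ unitCircle) (hi : Set.InjOn ψ unitCircle)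
    (J : Set (ℝ × ℝ)) (hJ : J = ψ '' unitCircle) :
    ∃ θ : ℝ, θ ∈ Set.Ioo 0 (2 * Real.pi) ∧
      ∀ a y₁ y₂ : ℝ, y₁ < y₂ →
        ¬ segment ℝ ((a, y₁) : ℝ × ℝ) (a, y₂) ⊆ rotCW θ '' J := by
  by_contra hcon
  push_neg at hcon
  have key : ∀ θ : ℝ, ∃ P Q : ℝ × ℝ, ∃ c : ℝ, θ ∈ Set.Ioo 0 π →
      c ≠ 0 ∧ Q - P = c • ((-Real.sin θ, Real.cos θ) : ℝ × ℝ) ∧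
      segment ℝ P Q ⊆ ψ '' unitCircle := by
    intro θ
    by_cases hθ : θ ∈ Set.Ioo 0 π
    · have hθ2 : θ ∈ Set.Ioo 0 (2 * π) := ⟨hθ.1, hθ.2.trans (by linarith [Real.pi_pos])⟩
      obtain ⟨a, y₁, y₂, hy, hs⟩ := hcon θ hθ2
      refine ⟨rotCW (-θ) (a, y₁), rotCW (-θ) (a, y₂), y₂ - y₁,
        fun _ => ⟨sub_ne_zero.mpr hy.ne', ?_, ?_⟩⟩
      · simp only [rotCW, Real.cos_neg, Real.sin_neg, Prod.smul_mk, smul_eq_mul,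
          Prod.mk_sub_mk, Prod.mk.injEq]
        constructor <;> ring
      · intro x hx
        have h1 : rotCW θ x ∈ segment ℝ ((a, y₁) : ℝ × ℝ) (a, y₂) := by
          have h2 := rotCW_mem_segment (θ := θ) hx
          rwa [rotCW_rotCW_neg, rotCW_rotCW_neg] at h2
        obtain ⟨j, hj, hjx⟩ := hs h1
        have hje : j = x := by
          have h3 := congrArg (rotCW (-θ)) hjx
          rwa [rotCW_neg_rotCW, rotCW_neg_rotCW] at h3
        rw [hJ] at hj
        exact hje ▸ hj
    · exact ⟨0, 0, 0, fun h => absurd h hθ⟩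
  choose P Q c hkey using key
  set x₀ := ψ (Real.cos 0, Real.sin 0) with hx₀
  set x₁ := ψ (Real.cos π, Real.sin π) with hx₁
  set Θ₀ : Set ℝ := {θ ∈ Set.Ioo 0 π | x₀ ∉ segment ℝ (P θ) (Q θ)} with hΘ₀
  set Θ₁ : Set ℝ := {θ ∈ Set.Ioo 0 π | x₁ ∉ segment ℝ (P θ) (Q θ)} with hΘ₁
  set B : Set ℝ := {θ ∈ Set.Ioo 0 π |
    x₀ ∈ segment ℝ (P θ) (Q θ) ∧ x₁ ∈ segment ℝ (P θ) (Q θ)} with hB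
  have hcount0 : Θ₀.Countable :=
    aux_countable ψ hc hi P Q c 0 Θ₀ (fun θ h => h.1)
      (fun θ h => ((hkey θ) h.1).1) (fun θ h => ((hkey θ) h.1).2.1)
      (fun θ h => ((hkey θ) h.1).2.2) (fun θ h => h.2)
  have hcount1 : Θ₁.Countable :=
    aux_countable ψ hc hi P Q c π Θ₁ (fun θ h => h.1)
      (fun θ h => ((hkey θ) h.1).1) (fun θ h => ((hkey θ) h.1).2.1)
      (fun θ h => ((hkey θ) h.1).2.2) (fun θ h => h.2)
  have hx01 : x₀ ≠ x₁ := by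
    intro h
    have he := hi (circle_mem 0) (circle_mem π) h
    rw [Prod.mk.injEq] at he
    rw [Real.cos_zero, Real.cos_pi] at he
    linarith [he.1]
  have hBsub : B.Subsingleton := by
    intro θ hθm θ' hθm'
    by_contra hne
    exact hx01 (cross hθm.1 hθm'.1 hne ((hkey θ) hθm.1).2.1 ((hkey θ') hθm'.1).2.1
      hθm.2.1 hθm.2.2 hθm'.2.1 hθm'.2.2)
  have hcover : Set.Ioo 0 π ⊆ Θ₀ ∪ Θ₁ ∪ B := by
    intro θ hθm
    by_cases h0 : x₀ ∈ segment ℝ (P θ) (Q θ)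
    · by_cases h1 : x₁ ∈ segment ℝ (P θ) (Q θ)
      · exact Or.inr ⟨hθm, h0, h1⟩
      · exact Or.inl (Or.inr ⟨hθm, h1⟩)
    · exact Or.inl (Or.inl ⟨hθm, h0⟩)
  have hcnt : (Set.Ioo (0 : ℝ) π).Countable :=
    (((hcount0.union hcount1).union hBsub.countable)).mono hcover
  have hmk := Cardinal.mk_Ioo_real (Real.pi_pos)
  have hle : (Cardinal.mk (Set.Ioo (0 : ℝ) π)) ≤ Cardinal.aleph0 :=
    Cardinal.le_aleph0_iff_set_countable.mpr hcnt
  rw [hmk] at hle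
  exact absurd hle (not_le.mpr Cardinal.aleph0_lt_continuum)
end

section
/- Let J be a Jordan curve given by a continuous injective map ψ: S¹ → ℝ², and let γ₁, γ₂, … be an infinite sequence of pairwise disjoint nondegenerate subarcs of J with endpoints u_i and v_i. If both limits lim u_i and lim v_i exist in ℝ², then they are equal. -/
/-- The standard angle parametrization of the unit circle. -/
noncomputable def circlePt (θ : ℝ) : ℝ × ℝ := (Real.cos θ, Real.sin θ)

lemma circlePt_mem (θ : ℝ) : circlePt θ ∈ unitCircle := by
  simp only [circlePt, unitCircle, Set.mem_setOf_eq]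
  exact Real.cos_sq_add_sin_sq θ

lemma circlePt_add_int (x : ℝ) (n : ℤ) : circlePt (x + n * (2 * Real.pi)) = circlePt x := by
  simp [circlePt, Real.cos_add_int_mul_two_pi, Real.sin_add_int_mul_two_pi]

lemma circlePt_lip (a b : ℝ) : dist (circlePt a) (circlePt b) ≤ |a - b| := by
  have h1 : |Real.cos a - Real.cos b| ≤ |a - b| := by
    rw [Real.cos_sub_cos]
    have h2 : |Real.sin ((a - b) / 2)| ≤ |(a - b) / 2| := Real.abs_sin_le_abs
    have h3 : |Real.sin ((a + b) / 2)| ≤ 1 := Real.abs_sin_le_one _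
    rw [abs_mul, abs_mul]
    have : |(a - b) / 2| = |a - b| / 2 := by rw [abs_div]; norm_num
    rw [this] at h2
    have hnn : (0:ℝ) ≤ |Real.sin ((a - b) / 2)| := abs_nonneg _
    have key := mul_le_mul h3 h2 hnn zero_le_one
    have : |(-2 : ℝ)| = 2 := by norm_num
    rw [this]
    nlinarith [abs_nonneg (a - b)]
  have h1' : |Real.sin a - Real.sin b| ≤ |a - b| := by
    rw [Real.sin_sub_sin]
    have h2 : |Real.sin ((a - b) / 2)| ≤ |(a - b) / 2| := Real.abs_sin_le_abs
    have h3 : |Real.cos ((a + b) / 2)| ≤ 1 := Real.abs_cos_le_one _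
    rw [abs_mul, abs_mul]
    have : |(a - b) / 2| = |a - b| / 2 := by rw [abs_div]; norm_num
    rw [this] at h2
    have key := mul_le_mul h3 h2 (abs_nonneg _) zero_le_one
    have : |(2 : ℝ)| = 2 := by norm_num
    rw [this]
    nlinarith [abs_nonneg (a - b)]
  rw [Prod.dist_eq]
  simp only [circlePt, Real.dist_eq]
  exact max_le h1 h1'

/-- given a Jordan curve `ψ` and an infinite sequence of pairwise
disjoint nondegenerate subarcs `γ i = ψ '' circlePt '' [s i, t i]` with endpoints
`u i`, `v i`, if both `lim u i` and `lim v i` exist then they are equal. -/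
theorem disjoint_subarcs_endpoint_limits_eq (ψ : ℝ × ℝ → ℝ × ℝ)
    (hc : ContinuousOn ψ unitCircle) (hi : Set.InjOn ψ unitCircle)
    (s t : ℕ → ℝ)
    (hst : ∀ i, s i < t i) (hlen : ∀ i, t i - s i < 2 * Real.pi)
    (γ : ℕ → Set (ℝ × ℝ)) (hγ : ∀ i, γ i = ψ '' (circlePt '' Set.Icc (s i) (t i)))
    (hdisj : Pairwise (Function.onFun Disjoint γ))
    (u v : ℕ → ℝ × ℝ)
    (hu : ∀ i, u i = ψ (circlePt (s i))) (hv : ∀ i, v i = ψ (circlePt (t i)))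
    (U V : ℝ × ℝ)
    (hU : Filter.Tendsto u Filter.atTop (nhds U))
    (hV : Filter.Tendsto v Filter.atTop (nhds V)) :
    U = V := by
  have hπ : (0:ℝ) < Real.pi := Real.pi_pos
  have hP : (0:ℝ) < 2 * Real.pi := by linarith
  -- Step A: the arc lengths tend to 0
  have hA : Filter.Tendsto (fun i => t i - s i) Filter.atTop (nhds 0) := by
    rw [Metric.tendsto_atTop]
    intro ε hε
    set N : ℕ := ⌈2 * Real.pi / ε⌉₊ with hNdef
    have hN0 : 0 < N := Nat.ceil_pos.mpr (by positivity)
    have hNR : (0:ℝ) < (N:ℝ) := by exact_mod_cast hN0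
    have hεN : 2 * Real.pi ≤ ε * N := by
      have h := Nat.le_ceil (2 * Real.pi / ε)
      rw [div_le_iff₀ hε] at h
      calc 2 * Real.pi ≤ ⌈2 * Real.pi / ε⌉₊ * ε := h
        _ = ε * N := by rw [hNdef]; ring
    -- angle associated to index i
    set m : ℕ → ℤ := fun i => ⌈s i * N / (2 * Real.pi)⌉ with hmdef
    set x : ℕ → ℝ := fun i => 2 * Real.pi * (m i) / N with hxdef
    set S : Set ℕ := {i | ε ≤ t i - s i} with hSdef
    have hxmem : ∀ i ∈ S, x i ∈ Set.Icc (s i) (t i) := by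
      intro i hiS
      have hiS' : ε ≤ t i - s i := hiS
      have h1 : s i * N / (2 * Real.pi) ≤ (m i : ℝ) := Int.le_ceil _
      have h2 : (m i : ℝ) < s i * N / (2 * Real.pi) + 1 := Int.ceil_lt_add_one _
      rw [div_le_iff₀ hP] at h1
      have h2' : ((m i : ℝ) - 1) * (2 * Real.pi) < s i * N := by
        have := (sub_lt_iff_lt_add).mpr h2
        calc ((m i : ℝ) - 1) * (2 * Real.pi) < s i * N / (2 * Real.pi) * (2 * Real.pi) := by
              apply mul_lt_mul_of_pos_right _ hP
              linarith
          _ = s i * N := by field_simp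
      constructor
      · rw [hxdef]
        rw [le_div_iff₀ hNR]
        nlinarith
      · rw [hxdef]
        rw [div_le_iff₀ hNR]
        nlinarith [mul_le_mul_of_nonneg_right hiS' hNR.le]
    -- the residue map
    set r : ℕ → ℤ := fun i => m i % (N:ℤ) with hrdef
    set q : ℕ → ℤ := fun i => m i / (N:ℤ) with hqdef
    set f : ℕ → ℕ := fun i => (r i).toNat with hfdef
    have hmod : ∀ i, circlePt (x i) = circlePt (2 * Real.pi * ((r i : ℤ) : ℝ) / N) := by
      intro i
      have hdvd : (N:ℤ) * q i + r i = m i := Int.mul_ediv_add_emod _ _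
      have hcast : (N:ℝ) * ((q i : ℤ) : ℝ) + ((r i : ℤ) : ℝ) = (m i : ℝ) := by
        exact_mod_cast congrArg (fun z : ℤ => (z : ℝ)) hdvd
      have hx' : x i = 2 * Real.pi * ((r i : ℤ) : ℝ) / N
          + ((q i : ℤ) : ℝ) * (2 * Real.pi) := by
        rw [hxdef]
        simp only
        rw [← hcast]
        field_simp
        ring
      rw [hx', circlePt_add_int]
    have hinj : Set.InjOn f S := by
      intro i hiS j hjS hfij
      by_contra hne
      have hnonneg : ∀ k : ℕ, 0 ≤ r k := fun k =>
        Int.emod_nonneg _ (by exact_mod_cast hN0.ne')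
      have hmeq : r i = r j := by
        have := congrArg (fun n : ℕ => (n : ℤ)) hfij
        simpa [hfdef, Int.toNat_of_nonneg (hnonneg i), Int.toNat_of_nonneg (hnonneg j)]
          using this
      have hceq : circlePt (x i) = circlePt (x j) := by
        rw [hmod i, hmod j, hmeq]
      have hmemi : ψ (circlePt (x i)) ∈ γ i := by
        rw [hγ i]
        exact Set.mem_image_of_mem _ (Set.mem_image_of_mem _ (hxmem i hiS))
      have hmemj : ψ (circlePt (x i)) ∈ γ j := by
        rw [hγ j, hceq]
        exact Set.mem_image_of_mem _ (Set.mem_image_of_mem _ (hxmem j hjS))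
      exact Set.disjoint_left.mp (hdisj hne) hmemi hmemj
    have hfbound : f '' S ⊆ Set.Iio N := by
      rintro _ ⟨i, _, rfl⟩
      have h1 : r i < N := Int.emod_lt_of_pos _ (by exact_mod_cast hN0)
      have h2 : 0 ≤ r i := Int.emod_nonneg _ (by exact_mod_cast hN0.ne')
      simp only [hfdef, Set.mem_Iio]
      omega
    have hSfin : S.Finite :=
      Set.Finite.of_finite_image ((Set.finite_Iio N).subset hfbound) hinj
    obtain ⟨M, hM⟩ := hSfin.bddAbove
    refine ⟨M + 1, fun n hn => ?_⟩
    have hnS : n ∉ S := by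
      intro hnS
      have := hM hnS
      omega
    have hlt : t n - s n < ε := lt_of_not_ge hnS
    rw [Real.dist_eq, sub_zero, abs_of_pos (by linarith [hst n])]
    exact hlt
  -- uniform continuity of ψ on the (compact) circle
  have hclosed : IsClosed unitCircle :=
    isClosed_eq ((continuous_fst.pow 2).add (continuous_snd.pow 2)) continuous_const
  have hbdd : Bornology.IsBounded unitCircle := by
    apply Bornology.IsBounded.subset (Metric.isBounded_closedBall (x := (0,0)) (r := 1))
    intro p hp
    have hp' : p.1 ^ 2 + p.2 ^ 2 = 1 := hp
    have h1 : |p.1| ≤ 1 := by nlinarith [sq_abs p.1, sq_nonneg p.2, abs_nonneg p.1]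
    have h2 : |p.2| ≤ 1 := by nlinarith [sq_abs p.2, sq_nonneg p.1, abs_nonneg p.2]
    simp only [Metric.mem_closedBall, Prod.dist_eq, Real.dist_eq, sub_zero]
    exact max_le h1 h2
  have hcompact : IsCompact unitCircle := Metric.isCompact_of_isClosed_isBounded hclosed hbdd
  have hUC := hcompact.uniformContinuousOn_of_continuous hc
  rw [Metric.uniformContinuousOn_iff] at hUC
  -- Step C: dist (u i) (v i) → 0
  have hC : Filter.Tendsto (fun i => dist (u i) (v i)) Filter.atTop (nhds 0) := by
    rw [Metric.tendsto_atTop]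
    intro ε hε
    obtain ⟨δ, hδ, hδ'⟩ := hUC ε hε
    obtain ⟨M, hM⟩ := Metric.tendsto_atTop.mp hA δ hδ
    refine ⟨M, fun n hn => ?_⟩
    have h1 : dist (circlePt (s n)) (circlePt (t n)) < δ := by
      have := hM n hn
      rw [Real.dist_eq, sub_zero] at this
      calc dist (circlePt (s n)) (circlePt (t n)) ≤ |s n - t n| := circlePt_lip _ _
        _ = |t n - s n| := by rw [abs_sub_comm]
        _ < δ := this
    have h2 : dist (ψ (circlePt (s n))) (ψ (circlePt (t n))) < ε :=
      hδ' _ (circlePt_mem _) _ (circlePt_mem _) h1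
    rw [Real.dist_eq, sub_zero, abs_of_nonneg dist_nonneg, hu, hv]
    exact h2
  have h1 : Filter.Tendsto (fun i => dist (u i) (v i)) Filter.atTop (nhds (dist U V)) :=
    hU.dist hV
  have : dist U V = 0 := tendsto_nhds_unique h1 hC
  exact dist_eq_zero.mp this
end

section
/- Let J be a Jordan curve with no vertical segments, let p_min, p_max be points of J of minimum and maximum x-coordinate, and let l be the vertical line midway between the vertical lines through p_min and p_max. Let J₁ and J₂ be the two subarcs of J from p_min to p_max. Then there exists a point p* ∈ l \ J such that the two endpoints u_{p*} and b_{p*} of the open segment s_{p*} belong to different arcs: one to J₁ \ J₂ and one to J₂ \ J₁. -/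
/-- Gap lemma: two disjoint nonempty compact subsets of ℝ admit an "adjacent pair". -/
lemma gap_lemma (Y₁ Y₂ : Set ℝ) (h₁ : IsCompact Y₁) (h₂ : IsCompact Y₂)
    (n₁ : Y₁.Nonempty) (n₂ : Y₂.Nonempty) (hd : ∀ y, y ∈ Y₁ → y ∉ Y₂) :
    ∃ a b : ℝ, a < b ∧ ((a ∈ Y₁ ∧ b ∈ Y₂) ∨ (a ∈ Y₂ ∧ b ∈ Y₁)) ∧
      ∀ y ∈ Y₁ ∪ Y₂, y ≤ a ∨ b ≤ y := by
  have hK : IsCompact (Y₁ ×ˢ Y₂) := h₁.prod h₂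
  have hcont : ContinuousOn (fun p : ℝ × ℝ => |p.1 - p.2|) (Y₁ ×ˢ Y₂) :=
    Continuous.continuousOn (by continuity)
  obtain ⟨q, hq, hmin'⟩ := hK.exists_isMinOn (n₁.prod n₂) hcont
  have hmin : ∀ y ∈ Y₁ ×ˢ Y₂, |q.1 - q.2| ≤ |y.1 - y.2| := fun y hy => hmin' hy
  obtain ⟨hq1, hq2⟩ := hq
  have hne : q.1 ≠ q.2 := fun h => hd _ hq1 (h ▸ hq2)
  rcases lt_or_gt_of_ne hne with h | h
  · refine ⟨q.1, q.2, h, Or.inl ⟨hq1, hq2⟩, ?_⟩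
    intro y hy
    by_contra hcon
    push_neg at hcon
    obtain ⟨hya, hyb⟩ := hcon
    rcases hy with hy | hy
    · have := hmin (y, q.2) ⟨hy, hq2⟩
      simp only at this
      rw [abs_of_neg (by linarith : q.1 - q.2 < 0),
        abs_of_neg (by linarith : y - q.2 < 0)] at this
      linarith
    · have := hmin (q.1, y) ⟨hq1, hy⟩
      simp only at this
      rw [abs_of_neg (by linarith : q.1 - q.2 < 0),
        abs_of_neg (by linarith : q.1 - y < 0)] at this
      linarith
  · refine ⟨q.2, q.1, h, Or.inr ⟨hq2, hq1⟩, ?_⟩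
    intro y hy
    by_contra hcon
    push_neg at hcon
    obtain ⟨hya, hyb⟩ := hcon
    rcases hy with hy | hy
    · have := hmin (y, q.2) ⟨hy, hq2⟩
      simp only at this
      rw [abs_of_pos (by linarith : (0:ℝ) < q.1 - q.2),
        abs_of_pos (by linarith : (0:ℝ) < y - q.2)] at this
      linarith
    · have := hmin (q.1, y) ⟨hq1, hy⟩
      simp only at this
      rw [abs_of_pos (by linarith : (0:ℝ) < q.1 - q.2),
        abs_of_pos (by linarith : (0:ℝ) < q.1 - y)] at this
      linarith

lemma unitCircle_eq : unitCircle = (fun θ : ℝ => (Real.cos θ, Real.sin θ)) '' Set.univ := by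
  ext p
  constructor
  · rintro hp
    have h1 : p.1 ^ 2 + p.2 ^ 2 = 1 := hp
    have hx1 : -1 ≤ p.1 := by nlinarith [sq_nonneg p.2]
    have hx2 : p.1 ≤ 1 := by nlinarith [sq_nonneg p.2]
    rcases le_or_gt 0 p.2 with hy | hy
    · refine ⟨Real.arccos p.1, trivial, ?_⟩
      show (Real.cos (Real.arccos p.1), Real.sin (Real.arccos p.1)) = p
      have hcos := Real.cos_arccos hx1 hx2
      have hsin := Real.sin_arccos p.1
      have : Real.sqrt (1 - p.1 ^ 2) = p.2 := by
        rw [show 1 - p.1 ^ 2 = p.2 ^ 2 by linarith]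
        exact Real.sqrt_sq hy
      exact Prod.ext hcos (by rw [hsin, this])
    · refine ⟨-Real.arccos p.1, trivial, ?_⟩
      show (Real.cos (-Real.arccos p.1), Real.sin (-Real.arccos p.1)) = p
      have hcos := Real.cos_arccos hx1 hx2
      have hsin := Real.sin_arccos p.1
      have : Real.sqrt (1 - p.1 ^ 2) = -p.2 := by
        rw [show 1 - p.1 ^ 2 = (-p.2) ^ 2 by ring_nf; linarith]
        exact Real.sqrt_sq (by linarith)
      refine Prod.ext (by simpa using hcos) ?_
      simp only [Real.sin_neg, hsin, this]
      ring
  · rintro ⟨θ, -, rfl⟩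
    show Real.cos θ ^ 2 + Real.sin θ ^ 2 = 1
    exact Real.cos_sq_add_sin_sq θ

/-- let `J` be a Jordan curve with no vertical segments, `pmin`/`pmax`
points of `J` of minimum/maximum `x`-coordinate, and `l` the vertical line midway
between them.  Let `J₁`, `J₂` be the two subarcs of `J` from `pmin` to `pmax`.  Then
there is a point `p* ∈ l \ J` such that the upper endpoint `(m, u)` and the lower
endpoint `(m, b)` of the open vertical segment at `p*` lie in different arcs:
one in `J₁ \ J₂` and the other in `J₂ \ J₁`. -/
theorem exists_root_segment (ψ : ℝ × ℝ → ℝ × ℝ)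
    (hc : ContinuousOn ψ unitCircle) (hi : Set.InjOn ψ unitCircle)
    (J : Set (ℝ × ℝ)) (hJ : J = ψ '' unitCircle)
    (hvert : ∀ a y₁ y₂ : ℝ, y₁ < y₂ →
      ¬ segment ℝ ((a, y₁) : ℝ × ℝ) (a, y₂) ⊆ J)
    (pmin pmax : ℝ × ℝ) (hpmin : pmin ∈ J) (hpmax : pmax ∈ J)
    (hmin : ∀ q ∈ J, pmin.1 ≤ q.1) (hmax : ∀ q ∈ J, q.1 ≤ pmax.1)
    (J₁ J₂ : Set (ℝ × ℝ))
    (hcup : J₁ ∪ J₂ = J) (hcap : J₁ ∩ J₂ = {pmin, pmax})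
    (hcomp₁ : IsCompact J₁) (hcomp₂ : IsCompact J₂)
    (hconn₁ : IsConnected J₁) (hconn₂ : IsConnected J₂)
    (m : ℝ) (hm : m = (pmin.1 + pmax.1) / 2) :
    ∃ p : ℝ × ℝ, p.1 = m ∧ p ∉ J ∧
      ∃ u b : ℝ,
        u = sInf {y : ℝ | ((m, y) : ℝ × ℝ) ∈ J ∧ p.2 < y} ∧
        b = sSup {y : ℝ | ((m, y) : ℝ × ℝ) ∈ J ∧ y < p.2} ∧
        ((((m, u) : ℝ × ℝ) ∈ J₁ \ J₂ ∧ ((m, b) : ℝ × ℝ) ∈ J₂ \ J₁) ∨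
         (((m, u) : ℝ × ℝ) ∈ J₂ \ J₁ ∧ ((m, b) : ℝ × ℝ) ∈ J₁ \ J₂)) := by
  -- Step 1: pmin.1 < pmax.1
  have hle : pmin.1 ≤ pmax.1 := hmin pmax hpmax
  have hlt : pmin.1 < pmax.1 := by
    rcases hle.lt_or_eq with h | h
    · exact h
    · exfalso
      have hx : ∀ q ∈ J, q.1 = pmin.1 := fun q hq =>
        le_antisymm (h ▸ hmax q hq) (hmin q hq)
      have h1 : ((1:ℝ), (0:ℝ)) ∈ unitCircle := by simp [unitCircle]
      have h2 : ((-1:ℝ), (0:ℝ)) ∈ unitCircle := by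
        show (-1:ℝ) ^ 2 + (0:ℝ) ^ 2 = 1; norm_num
      have hψ1 : ψ (1,0) ∈ J := hJ ▸ ⟨_, h1, rfl⟩
      have hψ2 : ψ (-1,0) ∈ J := hJ ▸ ⟨_, h2, rfl⟩
      have hney : (ψ (1,0)).2 ≠ (ψ (-1,0)).2 := by
        intro hE
        have : ((1:ℝ),(0:ℝ)) = ((-1:ℝ),(0:ℝ)) :=
          hi h1 h2 (Prod.ext (by rw [hx _ hψ1, hx _ hψ2]) hE)
        exact absurd (congrArg Prod.fst this) (by norm_num)
      -- J is preconnected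
      have hUpc : IsPreconnected unitCircle := by
        rw [unitCircle_eq]
        exact isPreconnected_univ.image _
          ((Real.continuous_cos.prodMk Real.continuous_sin).continuousOn)
      have hJpc : IsPreconnected J := by
        rw [hJ]
        exact hUpc.image ψ hc
      have hSpc : IsPreconnected (Prod.snd '' J) :=
        hJpc.image _ continuous_snd.continuousOn
      have hoc : Set.OrdConnected (Prod.snd '' J) := hSpc.ordConnected
      set y₁ := (ψ (1,0)).2
      set y₂ := (ψ (-1,0)).2
      have hy₁ : y₁ ∈ Prod.snd '' J := ⟨_, hψ1, rfl⟩
      have hy₂ : y₂ ∈ Prod.snd '' J := ⟨_, hψ2, rfl⟩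
      have key : ∀ z w : ℝ, z < w → z ∈ Prod.snd '' J → w ∈ Prod.snd '' J → False := by
        intro z w hzw hz hw
        apply hvert pmin.1 z w hzw
        intro v hv
        rw [segment_eq_image] at hv
        obtain ⟨t, ht, rfl⟩ := hv
        have hvy : (1 - t) * z + t * w ∈ Set.Icc z w := by
          constructor <;> nlinarith [ht.1, ht.2]
        have : ((1 - t) * z + t * w) ∈ Prod.snd '' J :=
          hoc.out hz hw hvy
        obtain ⟨q, hqJ, hq2⟩ := this
        have hq1 : q.1 = pmin.1 := hx q hqJ
        have heq : ((1 - t) • ((pmin.1, z) : ℝ × ℝ) + t • ((pmin.1, w) : ℝ × ℝ)) = q := by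
          rw [Prod.ext_iff]
          constructor
          · show (1 - t) * pmin.1 + t * pmin.1 = q.1
            rw [hq1]; ring
          · show (1 - t) * z + t * w = q.2
            rw [hq2]
        show ((1 - t) • ((pmin.1, z) : ℝ × ℝ) + t • ((pmin.1, w) : ℝ × ℝ)) ∈ J
        rw [heq]; exact hqJ
      rcases lt_or_gt_of_ne hney with hlt' | hlt'
      · exact key y₁ y₂ hlt' hy₁ hy₂
      · exact key y₂ y₁ hlt' hy₂ hy₁
  have hm1 : pmin.1 < m := by rw [hm]; linarith
  have hm2 : m < pmax.1 := by rw [hm]; linarith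
  -- pmin, pmax lie in both arcs
  have hpmin₁ : pmin ∈ J₁ ∩ J₂ := by rw [hcap]; left; rfl
  have hpmax₁ : pmax ∈ J₁ ∩ J₂ := by rw [hcap]; right; rfl
  -- the sets of heights on l
  set Y₁ : Set ℝ := {y | ((m,y) : ℝ×ℝ) ∈ J₁} with hY₁def
  set Y₂ : Set ℝ := {y | ((m,y) : ℝ×ℝ) ∈ J₂} with hY₂def
  have hYne : ∀ (K : Set (ℝ × ℝ)), IsConnected K → pmin ∈ K → pmax ∈ K →
      {y | ((m,y) : ℝ×ℝ) ∈ K}.Nonempty := by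
    intro K hK hK1 hK2
    have := hK.isPreconnected.intermediate_value hK1 hK2
      (continuous_fst.continuousOn (s := K))
    have hmem : m ∈ Set.Icc pmin.1 pmax.1 := ⟨le_of_lt hm1, le_of_lt hm2⟩
    obtain ⟨q, hqK, hq1⟩ := this hmem
    exact ⟨q.2, by rwa [Set.mem_setOf_eq, show ((m, q.2) : ℝ × ℝ) = q from Prod.ext hq1.symm rfl]⟩
  have hY₁ne : Y₁.Nonempty := hYne J₁ hconn₁ hpmin₁.1 hpmax₁.1
  have hY₂ne : Y₂.Nonempty := hYne J₂ hconn₂ hpmin₁.2 hpmax₁.2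
  have hYcomp : ∀ (K : Set (ℝ × ℝ)), IsCompact K → IsCompact {y | ((m,y) : ℝ×ℝ) ∈ K} := by
    intro K hK
    have hcl : IsClosed {y | ((m,y) : ℝ×ℝ) ∈ K} :=
      hK.isClosed.preimage (Continuous.prodMk_right m)
    have hsub : {y | ((m,y) : ℝ×ℝ) ∈ K} ⊆ Prod.snd '' K := fun y hy => ⟨_, hy, rfl⟩
    exact (hK.image continuous_snd).of_isClosed_subset hcl hsub
  have hY₁c : IsCompact Y₁ := hYcomp J₁ hcomp₁
  have hY₂c : IsCompact Y₂ := hYcomp J₂ hcomp₂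
  have hnotends : ∀ y : ℝ, ((m,y) : ℝ×ℝ) ∉ ({pmin, pmax} : Set (ℝ × ℝ)) := by
    intro y hy
    rcases hy with hy | hy
    · have : m = pmin.1 := congrArg Prod.fst hy
      linarith
    · have : m = pmax.1 := congrArg Prod.fst hy
      linarith
  have hdisj : ∀ y, y ∈ Y₁ → y ∉ Y₂ := by
    intro y h1 h2
    exact hnotends y (hcap ▸ ⟨h1, h2⟩)
  obtain ⟨a, b, hab, hmem, hgap⟩ := gap_lemma Y₁ Y₂ hY₁c hY₂c hY₁ne hY₂ne hdisj
  set c : ℝ := (a + b) / 2 with hc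
  have hac : a < c := by rw [hc]; linarith
  have hcb : c < b := by rw [hc]; linarith
  have hYJ : ∀ y : ℝ, ((m,y) : ℝ×ℝ) ∈ J → y ∈ Y₁ ∪ Y₂ := by
    intro y hy
    rw [← hcup] at hy
    exact hy
  have hpJ : ((m, c) : ℝ × ℝ) ∉ J := by
    intro hp
    rcases hgap c (hYJ c hp) with h | h <;> linarith
  refine ⟨(m, c), rfl, hpJ, _, _, rfl, rfl, ?_⟩
  -- compute the inf and sup
  have hbJ : ((m, b) : ℝ × ℝ) ∈ J := by
    rcases hmem with ⟨_, hb⟩ | ⟨_, hb⟩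
    · exact hcup ▸ Or.inr hb
    · exact hcup ▸ Or.inl hb
  have haJ : ((m, a) : ℝ × ℝ) ∈ J := by
    rcases hmem with ⟨ha, _⟩ | ⟨ha, _⟩
    · exact hcup ▸ Or.inl ha
    · exact hcup ▸ Or.inr ha
  have hInf : sInf {y : ℝ | ((m, y) : ℝ × ℝ) ∈ J ∧ ((m, c) : ℝ × ℝ).2 < y} = b := by
    apply IsLeast.csInf_eq
    constructor
    · exact ⟨hbJ, hcb⟩
    · intro y hy
      rcases hgap y (hYJ y hy.1) with h | h
      · exfalso; have := hy.2; simp only at this; linarith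
      · exact h
  have hSup : sSup {y : ℝ | ((m, y) : ℝ × ℝ) ∈ J ∧ y < ((m, c) : ℝ × ℝ).2} = a := by
    apply IsGreatest.csSup_eq
    constructor
    · exact ⟨haJ, hac⟩
    · intro y hy
      rcases hgap y (hYJ y hy.1) with h | h
      · exact h
      · exfalso; have := hy.2; simp only at this; linarith
  rw [hInf, hSup]
  have hnot₁ : ∀ y, y ∈ Y₂ → ((m,y) : ℝ×ℝ) ∉ J₁ := by
    intro y h2 h1
    exact hnotends y (hcap ▸ ⟨h1, h2⟩)
  have hnot₂ : ∀ y, y ∈ Y₁ → ((m,y) : ℝ×ℝ) ∉ J₂ := by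
    intro y h1 h2
    exact hnotends y (hcap ▸ ⟨h1, h2⟩)
  rcases hmem with ⟨ha, hb⟩ | ⟨ha, hb⟩
  · exact Or.inr ⟨⟨hb, hnot₁ b hb⟩, ⟨ha, hnot₂ a ha⟩⟩
  · exact Or.inl ⟨⟨hb, hnot₂ b hb⟩, ⟨ha, hnot₁ a ha⟩⟩
end
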